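/- Let $P_{Z}$ be a probability measure on $\mathbb{R}^n$ absolutely continuous with respect to the standard Gaussian measure $P_{Y} = \mathcal{N}(0, I_n)$, with finite second moment $\mathbb{E}[\|Z\|^2]$ and differential entropy $h(Z)$. Then $\mathbb{E}[\|Z\|^2] + n - 2n\sqrt{\frac{1}{2\pi e} e^{\frac{2}{n}h(Z)}} \leq 2 D(P_{Z} \| P_{Y})$, where $D$ denotes the Kullback–Leibler divergence. Equality holds if and only if $h(Z) = \frac{n}{2}\ln(2\pi e)$. -/

import Mathlib

/-!
Since `log γ(x) = -(n/2) log(2π) - ‖x‖²/2`, the relative entropy splits as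
`2 D = -2 h + n log(2π) + E`. Writing `h = n (s + ½ log(2πe))`, the square root in the bound is
`exp s` and the inequality becomes `s + 1 ≤ exp s`, with equality exactly at `s = 0`.
-/

open MeasureTheory Real
open scoped ENNReal

noncomputable def stdGaussianDensity (n : ℕ) (x : EuclideanSpace ℝ (Fin n)) : ℝ :=
  (2 * π) ^ (-(n : ℝ) / 2) * Real.exp (-‖x‖ ^ 2 / 2)

noncomputable def stdGaussian (n : ℕ) : Measure (EuclideanSpace ℝ (Fin n)) :=
  volume.withDensity fun x => ENNReal.ofReal (stdGaussianDensity n x)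

/-- s-finiteness of `μ` makes `μ.withDensity f s = ∫⁻ a in s, f a ∂μ` hold also when
`s = {f = 0}` is not measurable. -/
theorem ae_withDensity_ne_zero {α : Type*} [MeasurableSpace α] {μ : Measure α} [SFinite μ]
    (f : α → ℝ≥0∞) : ∀ᵐ x ∂μ.withDensity f, f x ≠ 0 := by
  rw [ae_iff, withDensity_apply']
  simp only [not_not]
  obtain ⟨g, hg, hgf, hgint⟩ := exists_measurable_le_lintegral_eq (μ.restrict {x | f x = 0}) f
  have hmeas : MeasurableSet {a | ¬g a = 0} := hg (measurableSet_singleton 0).compl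
  rw [hgint, lintegral_eq_zero_iff hg, Filter.EventuallyEq, ae_iff]
  simp only [Pi.zero_apply]
  rw [Measure.restrict_apply hmeas]
  exact measure_mono_null
    (fun x ⟨hgx, hfx⟩ => hgx (nonpos_iff_eq_zero.mp ((hgf x).trans_eq hfx))) measure_empty

theorem log_stdGaussianDensity (n : ℕ) (x : EuclideanSpace ℝ (Fin n)) :
    Real.log (stdGaussianDensity n x) = -(n / 2) * Real.log (2 * π) - ‖x‖ ^ 2 / 2 := by
  rw [stdGaussianDensity, Real.log_mul (by positivity) (Real.exp_ne_zero _),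
    Real.log_rpow (by positivity), Real.log_exp]
  ring

theorem integral_log_div_stdGaussianDensity {n : ℕ} {μ : Measure (EuclideanSpace ℝ (Fin n))}
    [IsProbabilityMeasure μ] {f : EuclideanSpace ℝ (Fin n) → ℝ} (hf : ∀ᵐ x ∂μ, 0 < f x)
    (hE2 : Integrable (fun x => ‖x‖ ^ 2) μ) (hlog : Integrable (fun x => Real.log (f x)) μ) :
    ∫ x, Real.log (f x / stdGaussianDensity n x) ∂μ =
      ∫ x, Real.log (f x) ∂μ + n / 2 * Real.log (2 * π) + (∫ x, ‖x‖ ^ 2 ∂μ) / 2 := by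
  have hsplit : (fun x => Real.log (f x / stdGaussianDensity n x)) =ᵐ[μ]
      fun x => Real.log (f x) + n / 2 * Real.log (2 * π) + ‖x‖ ^ 2 / 2 := by
    filter_upwards [hf] with x hx
    rw [Real.log_div hx.ne' (by unfold stdGaussianDensity; positivity), log_stdGaussianDensity]
    ring
  rw [integral_congr_ae hsplit,
    integral_add (f := fun x => Real.log (f x) + n / 2 * Real.log (2 * π))
      (hlog.add (integrable_const _)) (hE2.div_const 2),
    integral_add hlog (integrable_const _), integral_const, integral_div, probReal_univ, one_smul]

theorem sqrt_one_div_mul_exp_two_div_mul (n h c : ℝ) (hc : 0 < c) :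
    √(1 / c * Real.exp (2 / n * h)) = Real.exp (h / n - Real.log c / 2) := by
  have hsq : 1 / c * Real.exp (2 / n * h) = Real.exp (h / n - Real.log c / 2) ^ 2 := by
    rw [← Real.exp_nat_mul, show ((2 : ℕ) : ℝ) * (h / n - Real.log c / 2) =
      2 / n * h + -Real.log c by ring, Real.exp_add, Real.exp_neg, Real.exp_log hc]
    ring
  rw [hsq, Real.sqrt_sq (Real.exp_pos _).le]

theorem add_one_eq_exp_iff {s : ℝ} : s + 1 = Real.exp s ↔ s = 0 := by
  refine ⟨fun hs => ?_, fun hs => by simp [hs]⟩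
  by_contra hne
  exact (Real.add_one_lt_exp hne).ne hs

theorem stmt1_general (n : ℕ) (hn : 0 < n)
    (μ : Measure (EuclideanSpace ℝ (Fin n))) [IsProbabilityMeasure μ]
    (f : EuclideanSpace ℝ (Fin n) → ℝ)
    (hμ : μ = volume.withDensity fun x => ENNReal.ofReal (f x))
    (hE2 : Integrable (fun x => ‖x‖ ^ 2) μ)
    (hlog : Integrable (fun x => Real.log (f x)) μ)
    (E h D : ℝ)
    (hE : E = ∫ x, ‖x‖ ^ 2 ∂μ)
    (hh : h = -∫ x, Real.log (f x) ∂μ)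
    (hD : D = ∫ x, Real.log (f x / stdGaussianDensity n x) ∂μ) :
    E + n - 2 * n * Real.sqrt ((1 / (2 * π * Real.exp 1)) * Real.exp ((2 / n) * h)) ≤ 2 * D ∧
    (E + n - 2 * n * Real.sqrt ((1 / (2 * π * Real.exp 1)) * Real.exp ((2 / n) * h)) = 2 * D ↔
      h = ((n : ℝ) / 2) * Real.log (2 * π * Real.exp 1)) := by
  have hfpos : ∀ᵐ x ∂μ, 0 < f x := by
    rw [hμ]
    filter_upwards [ae_withDensity_ne_zero _] with x hx
    exact ENNReal.ofReal_pos.mp (pos_iff_ne_zero.mpr hx)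
  have hDval : D = -h + n / 2 * Real.log (2 * π) + E / 2 := by
    rw [hD, integral_log_div_stdGaussianDensity hfpos hE2 hlog, hh, hE]
    ring
  have hlog2πe : Real.log (2 * π * Real.exp 1) = Real.log (2 * π) + 1 := by
    rw [Real.log_mul (by positivity) (Real.exp_ne_zero 1), Real.log_exp]
  rw [sqrt_one_div_mul_exp_two_div_mul _ _ _ (by positivity)]
  set s := h / n - Real.log (2 * π * Real.exp 1) / 2
  have hnpos : (0 : ℝ) < n := Nat.cast_pos.mpr hn
  have hhs : h = n * s + n / 2 * Real.log (2 * π * Real.exp 1) := by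
    simp only [s]; field_simp; ring
  have hgap : 2 * D - (E + n - 2 * n * Real.exp s) = 2 * n * (Real.exp s - (s + 1)) := by
    rw [hDval, hhs, hlog2πe]; ring
  have hiff : E + n - 2 * n * Real.exp s = 2 * D ↔ s + 1 = Real.exp s := by
    rw [← sub_eq_zero, ← neg_eq_zero, neg_sub, hgap, mul_eq_zero_iff_left (by positivity),
      sub_eq_zero, eq_comm]
  refine ⟨by nlinarith [Real.add_one_le_exp s], ?_⟩
  rw [hiff, add_one_eq_exp_iff, hhs, add_eq_right, mul_eq_zero_iff_left hnpos.ne']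

/-- For `P_Z ≪ γ = N(0, Iₙ)` with density `f`, finite second moment `E`, differential
entropy `h` and relative entropy `D = D(P_Z ‖ γ)`, we have
`E + n − 2n √((1/(2πe)) e^{2h/n}) ≤ 2 D`, with equality iff `h = (n/2) ln(2πe)`. -/
theorem stmt1 (n : ℕ) (hn : 0 < n)
    (μ : Measure (EuclideanSpace ℝ (Fin n))) [IsProbabilityMeasure μ]
    (f : EuclideanSpace ℝ (Fin n) → ℝ)
    (hμ : μ = volume.withDensity fun x => ENNReal.ofReal (f x))
    (hac : μ ≪ stdGaussian n)
    (hE2 : Integrable (fun x => ‖x‖ ^ 2) μ)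
    (hlog : Integrable (fun x => Real.log (f x)) μ)
    (hDint : Integrable (fun x => Real.log (f x / stdGaussianDensity n x)) μ)
    (E h D : ℝ)
    (hE : E = ∫ x, ‖x‖ ^ 2 ∂μ)
    (hh : h = -∫ x, Real.log (f x) ∂μ)
    (hD : D = ∫ x, Real.log (f x / stdGaussianDensity n x) ∂μ) :
    E + n - 2 * n * Real.sqrt ((1 / (2 * π * Real.exp 1)) * Real.exp ((2 / n) * h)) ≤ 2 * D ∧
    (E + n - 2 * n * Real.sqrt ((1 / (2 * π * Real.exp 1)) * Real.exp ((2 / n) * h)) = 2 * D ↔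
      h = ((n : ℝ) / 2) * Real.log (2 * π * Real.exp 1)) :=
  stmt1_general n hn μ f hμ hE2 hlog E h D hE hh hD
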